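/- arXiv:1503.02375 — 2 statements merged into one kernel-verified Lean document; each statement's English description precedes it below -/
import Mathlib

section
/- Let T = ℕ, let X be a process on Ω with values in a measurable space (E, ℰ), and let S be a stopping time of the natural filtration F^X. Then F^X_S ⊆ σ(X^S), where X^S is viewed as a map from Ω into (E^ℕ, ℰ^{⊗ℕ}). In fact σ(X^S) = F^X_S. -/
/-!
Both σ-fields are compared on the pieces `{S = k}`, `k ∈ ℕ ∪ {∞}`. On `{S = k}` the stopped path
is the path stopped at the deterministic time `k`, which generates `F^X_k`; hence `F^X_S` and
`σ(X^S)` both induce the trace of `F^X_k` on `{S = k}`, provided the pieces are measurable for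
both. For `σ(X^S)` this is Galmarino's test: `{S ≤ n}` is a function of the path up to time `n`,
which on `{n ≤ S}` coincides with the stopped path up to time `n`, so `{n ≤ S} ∈ σ(X^S)` by
induction on `n`.
-/

open MeasureTheory Set

variable {Ω E : Type*}

/-- The natural filtration of a discrete-time process `X : ℕ → Ω → E`. -/
def natFilt [mE : MeasurableSpace E] (X : ℕ → Ω → E) (n : ℕ) : MeasurableSpace Ω :=
  ⨆ m, ⨆ _ : m ≤ n, mE.comap (X m)

/-- The process `X` stopped at the random time `S : Ω → ℕ ∪ {∞}`. -/
def stopped (X : ℕ → Ω → E) (S : Ω → ℕ∞) (n : ℕ) (ω : Ω) : E :=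
  X (min n (WithTop.untopD n (S ω))) ω

open MeasurableSpace

theorem MeasurableSpace.exists_measurableSet_comap_inter_eq_of_eqOn {α β : Type*}
    [mβ : MeasurableSpace β] {f g : α → β} {s A : Set α} (hfg : EqOn f g s)
    (hA : MeasurableSet[mβ.comap f] A) : ∃ B, MeasurableSet[mβ.comap g] B ∧ A ∩ s = B ∩ s := by
  obtain ⟨C, hC, rfl⟩ := hA
  exact ⟨g ⁻¹' C, ⟨C, hC, rfl⟩, by ext x; simp +contextual [hfg _]⟩

theorem MeasurableSpace.measurableSet_comap_inter_of_eqOn {α β : Type*}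
    [mβ : MeasurableSpace β] {f g : α → β} {s A : Set α} (hfg : EqOn f g s)
    (hs : MeasurableSet[mβ.comap g] s) (hA : MeasurableSet[mβ.comap f] (A ∩ s)) :
    MeasurableSet[mβ.comap g] (A ∩ s) := by
  obtain ⟨B, hB, hAB⟩ := exists_measurableSet_comap_inter_eq_of_eqOn hfg hA
  rw [inter_assoc, inter_self] at hAB
  exact hAB ▸ hB.inter hs

theorem MeasurableSpace.measurableSet_iff_forall_inter_eq {α ι : Type*} [Countable ι]
    {m : MeasurableSpace α} {f : α → ι} (hf : ∀ i, MeasurableSet[m] {x | f x = i}) {A : Set α} :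
    MeasurableSet[m] A ↔ ∀ i, MeasurableSet[m] (A ∩ {x | f x = i}) := by
  refine ⟨fun hA i => hA.inter (hf i), fun h => ?_⟩
  have : A = ⋃ i, A ∩ {x | f x = i} := by ext x; simp
  rw [this]
  exact MeasurableSet.iUnion h

theorem MeasureTheory.IsStoppingTime.measurableSet_inter_eq_top_iff {ι : Type*} [Preorder ι]
    {m : MeasurableSpace Ω} {f : Filtration ι m} {τ : Ω → WithTop ι} (hτ : IsStoppingTime f τ)
    (s : Set Ω) :
    MeasurableSet[hτ.measurableSpace] (s ∩ {ω | τ ω = ⊤}) ↔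
      MeasurableSet[⨆ i, f i] (s ∩ {ω | τ ω = ⊤}) := by
  refine ⟨fun h => h.1, fun h => ⟨h, fun i => ?_⟩⟩
  convert @MeasurableSet.empty _ (f i)
  ext ω
  simp +contextual

-- Written like `stopped`, so that `fun n => stopped X S n ω` is `stopAt (S ω) (X · ω)` by `rfl`.
def stopAt (k : ℕ∞) (x : ℕ → E) (n : ℕ) : E := x (min n (WithTop.untopD n k))

@[simp] theorem stopAt_top (x : ℕ → E) : stopAt ⊤ x = x := by
  funext n; exact congrArg x (min_self n)

theorem stopAt_apply_of_le {k : ℕ∞} {n : ℕ} (h : (n : ℕ∞) ≤ k) (x : ℕ → E) :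
    stopAt k x n = x n := by
  cases k with
  | top => exact congrArg x (min_self n)
  | coe k => exact congrArg x (min_eq_left (by exact_mod_cast h))

theorem stopAt_stopAt_of_le {k l : ℕ∞} (h : k ≤ l) (x : ℕ → E) :
    stopAt k (stopAt l x) = stopAt k x := by
  funext n
  cases k with
  | top => simp_all
  | coe k => exact stopAt_apply_of_le (by simpa using le_trans (by simp) h) x

theorem measurable_stopAt [MeasurableSpace E] (k : ℕ∞) : Measurable (stopAt (E := E) k) :=
  measurable_pi_lambda _ fun _ => measurable_pi_apply _

section NaturalFiltration

variable [mE : MeasurableSpace E] (X : ℕ → Ω → E)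

theorem measurable_natFilt {m n : ℕ} (h : m ≤ n) : Measurable[natFilt X n] (X m) :=
  Measurable.of_comap_le (le_iSup₂ (f := fun i (_ : i ≤ n) => mE.comap (X i)) m h)

theorem natFilt_mono : Monotone (natFilt X) := fun _ _ hkn =>
  iSup₂_le fun _ hm => (measurable_natFilt X (hm.trans hkn)).comap_le

def naturalFiltration : Filtration ℕ (⨆ n, natFilt X n) where
  seq := natFilt X
  mono' := natFilt_mono X
  le' := le_iSup (natFilt X)

def pathFilt (k : ℕ∞) : MeasurableSpace Ω :=
  MeasurableSpace.pi.comap fun ω => stopAt k fun m => X m ω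

theorem natFilt_eq_pathFilt (n : ℕ) : natFilt X n = pathFilt X n := by
  refine le_antisymm (iSup₂_le fun m hm => ?_) ?_
  · refine comap_le_comap_of_eq_comp (fun x => x m) (measurable_pi_apply m) (funext fun ω => ?_)
    exact (stopAt_apply_of_le (k := n) (Nat.cast_le.mpr hm) fun m => X m ω).symm
  · let _ := natFilt X n
    exact (measurable_pi_lambda _ fun m => measurable_natFilt X (min_le_right m n)).comap_le

theorem iSup_natFilt_eq_pathFilt_top : ⨆ n, natFilt X n = pathFilt X ⊤ := by
  refine le_antisymm (iSup_le fun n => ?_) ?_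
  · rw [natFilt_eq_pathFilt]
    exact comap_le_comap_of_eq_comp _ (measurable_stopAt n) (by simp [Function.comp_def])
  · let _ := ⨆ n, natFilt X n
    simp only [pathFilt, stopAt_top]
    exact (measurable_pi_lambda _ fun m =>
      (measurable_natFilt X le_rfl).mono (le_iSup (natFilt X) m) le_rfl).comap_le

end NaturalFiltration

section StoppingTime

variable [MeasurableSpace E] {X : ℕ → Ω → E} {S : Ω → ℕ∞}

theorem measurableSet_pathFilt_eq (hS : IsStoppingTime (naturalFiltration X) S) (k : ℕ∞) :
    MeasurableSet[pathFilt X k] {ω | S ω = k} := by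
  cases k with
  | top => rw [← iSup_natFilt_eq_pathFilt_top]; exact hS.measurableSet_eq_top'
  | coe n => rw [← natFilt_eq_pathFilt]; exact hS.measurableSet_eq_of_countable n

theorem measurableSet_inter_eq_iff_pathFilt (hS : IsStoppingTime (naturalFiltration X) S)
    (A : Set Ω) (k : ℕ∞) :
    MeasurableSet[hS.measurableSpace] (A ∩ {ω | S ω = k}) ↔
      MeasurableSet[pathFilt X k] (A ∩ {ω | S ω = k}) := by
  cases k with
  | top => rw [← iSup_natFilt_eq_pathFilt_top]; exact hS.measurableSet_inter_eq_top_iff A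
  | coe n => rw [← natFilt_eq_pathFilt]; exact hS.measurableSet_inter_eq_iff A n

theorem measurableSet_comap_stopped_le (hS : IsStoppingTime (naturalFiltration X) S) (n : ℕ) :
    MeasurableSet[pi.comap fun ω n => stopped X S n ω] {ω | (n : ℕ∞) ≤ S ω} := by
  induction n with
  | zero => simp
  | succ n ih =>
    have hEq : EqOn (fun ω => stopAt n fun m => X m ω)
        (fun ω => stopAt n fun m => stopped X S m ω) {ω | (n : ℕ∞) ≤ S ω} :=
      fun ω h => (stopAt_stopAt_of_le h _).symm
    have hle : MeasurableSet[pathFilt X n] {ω | S ω ≤ n} := by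
      rw [← natFilt_eq_pathFilt]; exact hS n
    obtain ⟨_, ⟨C, hC, rfl⟩, hB⟩ := exists_measurableSet_comap_inter_eq_of_eqOn hEq hle
    have : {ω | ((n + 1 : ℕ) : ℕ∞) ≤ S ω} =
        {ω | (n : ℕ∞) ≤ S ω} \ (fun ω => stopAt n fun m => stopped X S m ω) ⁻¹' C := by
      ext ω
      have hω := congrArg (ω ∈ ·) hB
      simp only [mem_inter_iff, mem_ofPred_eq, mem_preimage, eq_iff_iff] at hω
      simp only [mem_ofPred_eq, mem_sdiff, mem_preimage, Nat.cast_succ,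
        ENat.add_one_le_iff (ENat.natCast_ne_top n)]
      constructor
      · intro h; exact ⟨h.le, fun hC => (not_le.mpr h) (hω.mpr ⟨hC, h.le⟩).1⟩
      · rintro ⟨h, hC⟩; exact lt_of_le_of_ne h fun he => hC (hω.mp ⟨he.ge, h⟩).1
    rw [this]
    exact ih.diff ⟨stopAt n ⁻¹' C, measurable_stopAt n hC, rfl⟩

theorem measurableSet_comap_stopped_eq (hS : IsStoppingTime (naturalFiltration X) S) (k : ℕ∞) :
    MeasurableSet[pi.comap fun ω n => stopped X S n ω] {ω | S ω = k} := by
  cases k with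
  | top =>
    have : {ω | S ω = ⊤} = ⋂ n : ℕ, {ω | (n : ℕ∞) ≤ S ω} := by
      ext ω; simp [ENat.eq_top_iff_forall_ge]
    rw [this]
    exact MeasurableSet.iInter (measurableSet_comap_stopped_le hS)
  | coe n =>
    have : {ω | S ω = n} = {ω | (n : ℕ∞) ≤ S ω} \ {ω | ((n + 1 : ℕ) : ℕ∞) ≤ S ω} := by
      ext ω
      simp only [mem_ofPred_eq, mem_sdiff, Nat.cast_succ,
        ENat.add_one_le_iff (ENat.natCast_ne_top n), not_lt]
      exact ⟨fun h => ⟨h.ge, h.le⟩, fun h => le_antisymm h.2 h.1⟩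
    rw [this]
    exact (measurableSet_comap_stopped_le hS n).diff (measurableSet_comap_stopped_le hS (n + 1))

theorem measurableSet_comap_stopped_inter_eq_iff (hS : IsStoppingTime (naturalFiltration X) S)
    (A : Set Ω) (k : ℕ∞) :
    MeasurableSet[pi.comap fun ω n => stopped X S n ω] (A ∩ {ω | S ω = k}) ↔
      MeasurableSet[pathFilt X k] (A ∩ {ω | S ω = k}) := by
  have hEq : EqOn (fun ω n => stopped X S n ω) (fun ω => stopAt k fun m => X m ω)
      {ω | S ω = k} := fun ω (h : S ω = k) => congrArg (fun j => stopAt j fun m => X m ω) h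
  exact ⟨measurableSet_comap_inter_of_eqOn hEq (measurableSet_pathFilt_eq hS k),
    measurableSet_comap_inter_of_eqOn hEq.symm (measurableSet_comap_stopped_eq hS k)⟩

theorem MeasureTheory.IsStoppingTime.measurableSpace_eq_comap_stopped
    (hS : IsStoppingTime (naturalFiltration X) S) :
    hS.measurableSpace = pi.comap fun ω n => stopped X S n ω := by
  have hF : ∀ k, MeasurableSet[hS.measurableSpace] {ω | S ω = k} := fun k => by
    simpa using (measurableSet_inter_eq_iff_pathFilt hS univ k).mpr
      (by simpa using measurableSet_pathFilt_eq hS k)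
  ext A
  rw [measurableSet_iff_forall_inter_eq hF,
    measurableSet_iff_forall_inter_eq (measurableSet_comap_stopped_eq hS)]
  exact forall_congr' fun k => (measurableSet_inter_eq_iff_pathFilt hS A k).trans
    (measurableSet_comap_stopped_inter_eq_iff hS A k).symm

end StoppingTime

/-- In discrete time, for a stopping time `S` of the natural filtration of `X`,
the σ-field `F^X_S` coincides with the σ-field generated by the stopped process `X^S`
(the latter viewed as a map into `E^ℕ` with the product σ-algebra). -/
theorem stmt_2 [MeasurableSpace E] (X : ℕ → Ω → E) (S : Ω → ℕ∞)
    (hS : ∀ n : ℕ, MeasurableSet[natFilt X n] {ω | S ω ≤ (n : ℕ∞)}) :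
    ∀ A : Set Ω,
      (MeasurableSet[⨆ n, natFilt X n] A ∧
          ∀ n : ℕ, MeasurableSet[natFilt X n] (A ∩ {ω | S ω ≤ (n : ℕ∞)})) ↔
        MeasurableSet[MeasurableSpace.comap (fun ω (n : ℕ) => stopped X S n ω)
          MeasurableSpace.pi] A := by
  have hS' : IsStoppingTime (naturalFiltration X) S := hS
  intro A
  rw [← IsStoppingTime.measurableSpace_eq_comap_stopped hS']
  rfl
end

section
/- In a coherent stochastic control system with the weak upwards lattice property and {0, ∞} ⊆ 𝔊, the Bellman system V is a (C, 𝔊)-supermartingale system: for all S, T ∈ 𝔊 and c ∈ C such that S^d ≤ T^d P^d-a.s. for all d ∈ D(c,T), one has E^{P^c}[V(c,T) | G^c_{S^c}] ≤ V(c,S) P^c-a.s. -/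
open MeasureTheory Set Filter

variable {Ω C T : Type*}

/-- The σ-field `G_S` of a filtration `G` at a stopping time `S`. -/
def sigmaAtTime [LinearOrder T] (G : T → MeasurableSpace Ω) (S : Ω → WithTop T)
    (hS : ∀ t : T, MeasurableSet[G t] {ω | S ω ≤ (t : WithTop T)}) : MeasurableSpace Ω where
  MeasurableSet' A := MeasurableSet[⨆ t, G t] A ∧
    ∀ t : T, MeasurableSet[G t] (A ∩ {ω | S ω ≤ (t : WithTop T)})
  measurableSet_empty := ⟨@MeasurableSet.empty _ (⨆ t, G t), fun t => by simp⟩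
  measurableSet_compl := by
    rintro A ⟨hAinf, hA⟩
    refine ⟨hAinf.compl, fun t => ?_⟩
    have : Aᶜ ∩ {ω | S ω ≤ (t : WithTop T)} =
        {ω | S ω ≤ (t : WithTop T)} ∩ (A ∩ {ω | S ω ≤ (t : WithTop T)})ᶜ := by
      ext ω
      simp only [Set.mem_inter_iff, Set.mem_compl_iff, Set.mem_setOf_eq]
      tauto
    rw [this]
    exact (hS t).inter (hA t).compl
  measurableSet_iUnion := by
    intro f hf
    refine ⟨MeasurableSet.iUnion fun i => (hf i).1, fun t => ?_⟩
    rw [Set.iUnion_inter]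
    exact MeasurableSet.iUnion fun i => (hf i).2 t

/-- The positive part of an extended-real number, as a value in `[0,∞]`. -/
noncomputable def epos (x : EReal) : ENNReal :=
  if x = ⊤ then ⊤ else ENNReal.ofReal x.toReal

/-- The negative part of an extended-real number, as a value in `[0,∞]`. -/
noncomputable def eneg (x : EReal) : ENNReal := epos (-x)

/-- `Y` is a version of the conditional expectation `E[X | G]` under `P`, for an
extended-real-valued `X`: `Y` is `G`-measurable and for every `B ∈ G` the (possibly
infinite) integrals of `X` and `Y` over `B` agree, in the subtraction-free form
`∫_B Y⁺ + ∫_B X⁻ = ∫_B X⁺ + ∫_B Y⁻`. -/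
def IsCondExp {m : MeasurableSpace Ω} (G : MeasurableSpace Ω) (P : @Measure Ω m)
    (X Y : Ω → EReal) : Prop :=
  Measurable[G] Y ∧ ∀ B : Set Ω, MeasurableSet[G] B →
    (∫⁻ ω in B, epos (Y ω) ∂P) + (∫⁻ ω in B, eneg (X ω) ∂P) =
      (∫⁻ ω in B, epos (X ω) ∂P) + (∫⁻ ω in B, eneg (Y ω) ∂P)

/-- `Z` is a `P`-essential supremum of the family `F`: it is an a.s. upper bound of the
family which is a.s. below any other a.s. upper bound. -/
def IsEssSup {ι : Type*} {m : MeasurableSpace Ω} (P : @Measure Ω m)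
    (F : ι → Ω → EReal) (Z : Ω → EReal) : Prop :=
  (∀ i, ∀ᵐ ω ∂P, F i ω ≤ Z ω) ∧
    ∀ W : Ω → EReal, (∀ i, ∀ᵐ ω ∂P, F i ω ≤ W ω) → ∀ᵐ ω ∂P, Z ω ≤ W ω

/-- The expectation of an extended-real random variable `f` under `P`, defined (as an
extended real) whenever one of the parts is integrable. -/
noncomputable def eInt {m : MeasurableSpace Ω} (P : @Measure Ω m) (f : Ω → EReal) : EReal :=
  ((∫⁻ ω, epos (f ω) ∂P : ENNReal) : EReal) - ((∫⁻ ω, eneg (f ω) ∂P : ENNReal) : EReal)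

/-- A **coherent stochastic control system** (a stochastic control system with adaptive
control dynamics which is stable under stopping), with time set `T`, control set `C` and
sample space `Ω`. -/
structure CCS (Ω C T : Type*) [LinearOrder T] [OrderBot T] where
  /-- the ambient σ-field (containing the domains of all the `P c`) -/
  m : MeasurableSpace Ω
  /-- the terminal informations `F^c` -/
  F : C → MeasurableSpace Ω
  hF : ∀ c, F c ≤ m
  /-- the control laws `P^c` -/
  P : C → @Measure Ω m
  hP : ∀ c, IsProbabilityMeasure (P c)
  /-- the reward function -/
  J : C → Ω → EReal
  hJmeas : ∀ c, Measurable[F c] (J c)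
  hJneg : ∀ c, (∫⁻ ω, eneg (J c ω) ∂P c) < ⊤
  /-- the observed filtrations `G^c` -/
  G : C → T → MeasurableSpace Ω
  hGmono : ∀ c, Monotone (G c)
  hGF : ∀ c, (⨆ t, G c t) ≤ F c
  /-- the triviality and equality of the `G^c` and `P^c` at time `0 = ⊥` -/
  hG0eq : ∀ c d, G c ⊥ = G d ⊥
  hG0triv : ∀ c, ∀ A : Set Ω, MeasurableSet[G c ⊥] A → P c A = 0 ∨ P c A = 1
  hP0 : ∀ c d, ∀ A : Set Ω, MeasurableSet[G c ⊥] A → P c A = P d A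
  /-- the distinguished family `𝔊` of control times -/
  CT : Set (C → Ω → WithTop T)
  hCT : ∀ S ∈ CT, ∀ c, ∀ t : T, MeasurableSet[G c t] {ω | S c ω ≤ (t : WithTop T)}
  /-- the adaptive control dynamics `D(c, S)` -/
  D : C → (C → Ω → WithTop T) → Set C
  hD_self : ∀ c, ∀ S ∈ CT, c ∈ D c S
  hD_time : ∀ c d, ∀ S ∈ CT, d ∈ D c S → S c = S d
  hD_class : ∀ c d, ∀ S ∈ CT, d ∈ D c S → D c S = D d S
  hD_mono : ∀ S ∈ CT, ∀ T' ∈ CT, ∀ c,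
    (∀ d ∈ D c T', ∀ᵐ ω ∂P d, S d ω ≤ T' d ω) → D c T' ⊆ D c S
  hD_top : ∀ c, ∀ S ∈ CT, (∀ ω, S c ω = ⊤) → D c S = {c}
  hD_bot : ∀ c, ∀ S ∈ CT, (∀ ω, S c ω = ((⊥ : T) : WithTop T)) → D c S = Set.univ
  /-- stability under stopping: informational consistency -/
  hStableG : ∀ c d, ∀ S, ∀ hS : S ∈ CT, d ∈ D c S →
    sigmaAtTime (G c) (S c) (hCT S hS c) = sigmaAtTime (G d) (S d) (hCT S hS d)
  /-- stability under stopping: consistency of the laws -/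
  hStableP : ∀ c d, ∀ S, ∀ hS : S ∈ CT, d ∈ D c S →
    ∀ A : Set Ω, MeasurableSet[sigmaAtTime (G c) (S c) (hCT S hS c)] A → P c A = P d A

/-!
Fix reals `a < b` and let `B = {V(c,S) < a} ∩ {b < Y} ∩ {S^c ≤ T'^c}`; it is an event of
`G^c_{S^c}` and, since `S^c ≤ T'^c` on `B`, also of `G^c_{T'^c}`. For `d ∈ D(c,T') ⊆ D(c,S)`,
stability under stopping lets one compute `∫_B J(d,T') dP^c` and `∫_B J(d,S) dP^c` under `P^d`,
where both equal `∫_B J(d) dP^d` by the tower property; hence `∫_B J(d,T') dP^c ≤ a P^c(B)`.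
A countable subfamily attains the essential supremum of the truncations `M ⊓ J(d,T')`, and the
weak upwards lattice property dominates its running maxima, up to `ε`, by single payoffs; monotone
convergence (first along the family, then in `M`) gives `∫_B V(c,T') dP^c ≤ a P^c(B)`. But
`∫_B Y dP^c = ∫_B V(c,T') dP^c ≥ b P^c(B)`, so `P^c(B) = 0`, and `S^c ≤ T'^c` a.s. concludes.
-/

open scoped ENNReal NNReal

section PositiveNegativeParts

-- `epos` is definitionally `EReal.toENNReal`, whose API is used throughout.

@[simp] lemma epos_coe (r : ℝ) : epos r = ENNReal.ofReal r := rfl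

@[simp] lemma eneg_coe (r : ℝ) : eneg r = ENNReal.ofReal (-r) := rfl

lemma monotone_epos : Monotone epos := fun _ _ h => EReal.toENNReal_le_toENNReal h

lemma antitone_eneg : Antitone eneg := fun _ _ h => monotone_epos (EReal.neg_le_neg_iff.2 h)

lemma continuous_epos : Continuous epos := EReal.continuous_toENNReal

lemma continuous_eneg : Continuous eneg := continuous_epos.comp continuous_neg

lemma measurable_epos : Measurable epos := continuous_epos.measurable

lemma measurable_eneg : Measurable eneg := continuous_eneg.measurable

lemma eneg_of_nonneg {x : EReal} (hx : 0 ≤ x) : eneg x = 0 :=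
  EReal.toENNReal_of_nonpos (EReal.neg_le_neg_iff.2 hx |>.trans_eq neg_zero)

lemma eneg_coe_inf {M : ℝ} (hM : 0 ≤ M) (x : EReal) : eneg ((M : EReal) ⊓ x) = eneg x := by
  rcases le_total (M : EReal) x with h | h
  · rw [inf_eq_left.2 h, eneg_of_nonneg (EReal.coe_nonneg.2 hM),
      eneg_of_nonneg ((EReal.coe_nonneg.2 hM).trans h)]
  · rw [inf_eq_right.2 h]

lemma epos_iSup {ι : Sort*} (u : ι → EReal) : epos (⨆ i, u i) = ⨆ i, epos (u i) :=
  monotone_epos.map_iSup_of_continuousAt continuous_epos.continuousAt EReal.toENNReal_bot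

lemma eneg_iSup {ι : Sort*} (u : ι → EReal) : eneg (⨆ i, u i) = ⨅ i, eneg (u i) :=
  antitone_eneg.map_iSup_of_continuousAt continuous_eneg.continuousAt rfl

end PositiveNegativeParts

lemma EReal.coe_ennreal_sub_le_coe_ennreal_sub_iff {a b c d : ℝ≥0∞} (hb : b ≠ ⊤) (hd : d ≠ ⊤) :
    (a : EReal) - b ≤ c - d ↔ a + d ≤ c + b := by
  lift b to ℝ≥0 using hb
  lift d to ℝ≥0 using hd
  induction c with
  | top => simp [EReal.coe_nnreal_eq_coe_real]
  | coe c =>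
    induction a with
    | top => simp [EReal.coe_nnreal_eq_coe_real, ← EReal.coe_sub, ← ENNReal.coe_add]
    | coe a =>
      simp only [EReal.coe_nnreal_eq_coe_real, ← EReal.coe_sub, EReal.coe_le_coe_iff,
        ← ENNReal.coe_add, ENNReal.coe_le_coe, ← NNReal.coe_le_coe, NNReal.coe_add]
      constructor <;> intro h <;> linarith

lemma EReal.le_of_forall_pos_le_coe_add {x : EReal} {y : ℝ}
    (h : ∀ ε : ℝ, 0 < ε → x ≤ ((y + ε : ℝ) : EReal)) : x ≤ y :=
  EReal.le_of_forall_lt_iff_le.1 fun z hz => by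
    simpa using h (z - y) (_root_.sub_pos.2 (EReal.coe_lt_coe_iff.1 hz))

lemma EReal.coe_ennreal_ofReal_sub_coe_ennreal_ofReal_neg (x : ℝ) :
    (ENNReal.ofReal x : EReal) - (ENNReal.ofReal (-x) : EReal) = x := by
  rcases le_total 0 x with hx | hx
  · rw [ENNReal.ofReal_of_nonpos (neg_nonpos.2 hx), EReal.coe_ennreal_zero, sub_zero,
      EReal.coe_ennreal_ofReal, max_eq_left hx]
  · rw [ENNReal.ofReal_of_nonpos hx, EReal.coe_ennreal_zero, zero_sub, EReal.coe_ennreal_ofReal,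
      max_eq_left (neg_nonneg.2 hx), ← EReal.coe_neg, neg_neg]

lemma EReal.inf_add_le_add (M x : EReal) {δ : ℝ} (hδ : 0 ≤ δ) : M ⊓ (x + δ) ≤ M ⊓ x + δ := by
  rw [← min_add_add_right]
  exact inf_le_inf_right _ (le_add_of_nonneg_right (EReal.coe_nonneg.2 hδ))

lemma EReal.iSup_natCast_add_one : ⨆ n : ℕ, (((n : ℝ) + 1 : ℝ) : EReal) = ⊤ :=
  iSup_eq_top.2 fun b hb => by
    obtain ⟨q, hq, -⟩ := EReal.exists_rat_btwn_of_lt hb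
    obtain ⟨n, hn⟩ := exists_nat_gt (q : ℝ)
    exact ⟨n, hq.trans (EReal.coe_lt_coe_iff.2 (by linarith))⟩

section ExtendedIntegral

variable {m0 : MeasurableSpace Ω} {μ ν : Measure Ω}

lemma eInt_mono {f g : Ω → EReal} (h : f ≤ᵐ[μ] g) : eInt μ f ≤ eInt μ g :=
  EReal.sub_le_sub
    (EReal.coe_ennreal_le_coe_ennreal_iff.2 (lintegral_mono_ae (h.mono fun _ => (monotone_epos ·))))
    (EReal.coe_ennreal_le_coe_ennreal_iff.2 (lintegral_mono_ae (h.mono fun _ => (antitone_eneg ·))))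

lemma eInt_le_eInt_iff {f g : Ω → EReal} (hf : ∫⁻ ω, eneg (f ω) ∂μ ≠ ⊤)
    (hg : ∫⁻ ω, eneg (g ω) ∂μ ≠ ⊤) :
    eInt μ f ≤ eInt μ g ↔
      ∫⁻ ω, epos (f ω) ∂μ + ∫⁻ ω, eneg (g ω) ∂μ ≤ ∫⁻ ω, epos (g ω) ∂μ + ∫⁻ ω, eneg (f ω) ∂μ :=
  EReal.coe_ennreal_sub_le_coe_ennreal_sub_iff hf hg

lemma eInt_le_coe_iff {f : Ω → EReal} (hf : ∫⁻ ω, eneg (f ω) ∂μ ≠ ⊤) (x : ℝ) :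
    eInt μ f ≤ x ↔
      ∫⁻ ω, epos (f ω) ∂μ + ENNReal.ofReal (-x) ≤ ENNReal.ofReal x + ∫⁻ ω, eneg (f ω) ∂μ := by
  rw [eInt, ← EReal.coe_ennreal_sub_le_coe_ennreal_sub_iff hf ENNReal.ofReal_ne_top,
    EReal.coe_ennreal_ofReal_sub_coe_ennreal_ofReal_neg]

lemma eInt_const [IsFiniteMeasure μ] (x : ℝ) :
    eInt μ (fun _ => (x : EReal)) = ((x * (μ univ).toReal : ℝ) : EReal) := by
  have hm : μ univ = ENNReal.ofReal (μ univ).toReal :=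
    (ENNReal.ofReal_toReal (measure_ne_top μ univ)).symm
  have hm0 : 0 ≤ (μ univ).toReal := ENNReal.toReal_nonneg
  rw [eInt, lintegral_const, lintegral_const, epos_coe, eneg_coe, hm, ENNReal.toReal_ofReal hm0]
  rcases le_total 0 x with hx | hx
  · rw [ENNReal.ofReal_of_nonpos (neg_nonpos.2 hx), zero_mul, EReal.coe_ennreal_zero, sub_zero,
      ← ENNReal.ofReal_mul hx, EReal.coe_ennreal_ofReal, max_eq_left (mul_nonneg hx hm0)]
  · rw [ENNReal.ofReal_of_nonpos hx, zero_mul, EReal.coe_ennreal_zero, zero_sub,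
      ← ENNReal.ofReal_mul (neg_nonneg.2 hx), EReal.coe_ennreal_ofReal,
      max_eq_left (mul_nonneg (neg_nonneg.2 hx) hm0), ← EReal.coe_neg, neg_mul, neg_neg]

lemma eInt_add_const_le {f : Ω → EReal} {δ : ℝ} (hδ : 0 ≤ δ) (hμ : μ univ ≤ 1)
    (hf : ∫⁻ ω, eneg (f ω) ∂μ ≠ ⊤) :
    eInt μ (fun ω => f ω + δ) ≤ eInt μ f + ((2 * δ : ℝ) : EReal) := by
  have hconst : ∀ g : Ω → ℝ≥0∞, ∫⁻ ω, (g ω + ENNReal.ofReal δ) ∂μ ≤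
      ∫⁻ ω, g ω ∂μ + ENNReal.ofReal δ := fun g => by
    rw [lintegral_add_right _ measurable_const, lintegral_const]
    gcongr
    exact mul_le_of_le_one_right' hμ
  have hpos : ∫⁻ ω, epos (f ω + δ) ∂μ ≤ ∫⁻ ω, epos (f ω) ∂μ + ENNReal.ofReal δ :=
    (lintegral_mono fun ω => EReal.toENNReal_add_le).trans (hconst _)
  have hneg : ∫⁻ ω, eneg (f ω) ∂μ ≤ ∫⁻ ω, eneg (f ω + δ) ∂μ + ENNReal.ofReal δ := by
    refine (lintegral_mono fun ω => ?_).trans (hconst _)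
    refine (monotone_epos ?_).trans (EReal.toENNReal_add_le (x := -(f ω + δ)) (y := δ))
    induction f ω using EReal.rec <;> simp [← EReal.coe_add, ← EReal.coe_neg]
  have hneg' : ∫⁻ ω, eneg (f ω + δ) ∂μ ≤ ∫⁻ ω, eneg (f ω) ∂μ :=
    lintegral_mono fun ω => antitone_eneg (le_add_of_nonneg_right (EReal.coe_nonneg.2 hδ))
  rw [eInt, eInt]
  set P := ∫⁻ ω, epos (f ω) ∂μ
  by_cases hP : P = ⊤
  · rw [hP, EReal.coe_ennreal_top, ← EReal.coe_ennreal_toReal hf, EReal.top_sub_coe,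
      EReal.top_add_coe]
    exact le_top
  have hfδ := ne_top_of_le_ne_top hf hneg'
  have hPδ := ne_top_of_le_ne_top (by finiteness) hpos
  rw [← EReal.coe_ennreal_toReal hP, ← EReal.coe_ennreal_toReal hf, ← EReal.coe_ennreal_toReal hfδ,
    ← EReal.coe_ennreal_toReal hPδ, ← EReal.coe_sub, ← EReal.coe_sub, ← EReal.coe_add,
    EReal.coe_le_coe_iff]
  have h1 := ENNReal.toReal_mono (by finiteness) hpos
  have h2 := ENNReal.toReal_mono (by finiteness) hneg
  rw [ENNReal.toReal_add hP ENNReal.ofReal_ne_top, ENNReal.toReal_ofReal hδ] at h1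
  rw [ENNReal.toReal_add hfδ ENNReal.ofReal_ne_top, ENNReal.toReal_ofReal hδ] at h2
  linarith

lemma eInt_iSup_le {r : ℕ → Ω → EReal} (hr : ∀ n, Measurable (r n)) (hmono : Monotone r)
    (h0 : ∫⁻ ω, eneg (r 0 ω) ∂μ ≠ ⊤) {x : ℝ} (hx : ∀ n, eInt μ (r n) ≤ x) :
    eInt μ (fun ω => ⨆ n, r n ω) ≤ x := by
  have hneg : ∀ n, ∫⁻ ω, eneg (r n ω) ∂μ ≠ ⊤ := fun n =>
    ne_top_of_le_ne_top h0 (lintegral_mono fun ω => antitone_eneg (hmono (Nat.zero_le n) ω))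
  have hsup : ∫⁻ ω, epos (⨆ n, r n ω) ∂μ = ⨆ n, ∫⁻ ω, epos (r n ω) ∂μ := by
    simp_rw [epos_iSup]
    exact lintegral_iSup (fun n => measurable_epos.comp (hr n))
      fun n m h ω => monotone_epos (hmono h ω)
  have hinf : ∫⁻ ω, eneg (⨆ n, r n ω) ∂μ = ⨅ n, ∫⁻ ω, eneg (r n ω) ∂μ := by
    simp_rw [eneg_iSup]
    exact lintegral_iInf (fun n => measurable_eneg.comp (hr n))
      (fun n m h ω => antitone_eneg (hmono h ω)) h0
  rw [eInt_le_coe_iff (hinf ▸ ne_top_of_le_ne_top h0 (iInf_le _ 0)), hsup, hinf,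
    ENNReal.iSup_add, ENNReal.add_iInf]
  refine iSup_le fun n => le_iInf fun m => ?_
  calc ∫⁻ ω, epos (r n ω) ∂μ + ENNReal.ofReal (-x)
      ≤ ∫⁻ ω, epos (r (max n m) ω) ∂μ + ENNReal.ofReal (-x) := by
        gcongr with ω
        exact monotone_epos (hmono (le_max_left n m) ω)
    _ ≤ ENNReal.ofReal x + ∫⁻ ω, eneg (r (max n m) ω) ∂μ :=
        (eInt_le_coe_iff (hneg _) x).1 (hx _)
    _ ≤ ENNReal.ofReal x + ∫⁻ ω, eneg (r m ω) ∂μ := by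
        gcongr with ω
        exact antitone_eneg (hmono (le_max_right n m) ω)

lemma measure_eq_zero_of_eInt_restrict_le [IsFiniteMeasure μ] {f : Ω → EReal} {B : Set Ω}
    (hB : MeasurableSet B) {a b : ℝ} (hab : a < b) (hfB : ∀ ω ∈ B, (b : EReal) < f ω)
    (hf : eInt (μ.restrict B) f ≤ ((a * (μ B).toReal : ℝ) : EReal)) : μ B = 0 := by
  have hb : ((b * (μ B).toReal : ℝ) : EReal) ≤ eInt (μ.restrict B) f := by
    rw [← Measure.restrict_apply_univ B, ← eInt_const]
    exact eInt_mono ((ae_restrict_mem hB).mono fun ω hω => (hfB ω hω).le)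
  have hp : b * (μ B).toReal ≤ a * (μ B).toReal := EReal.coe_le_coe_iff.1 (hb.trans hf)
  have hp0 : (μ B).toReal = 0 := le_antisymm (by nlinarith) ENNReal.toReal_nonneg
  exact ((ENNReal.toReal_eq_zero_iff _).1 hp0).resolve_right (measure_ne_top μ B)

lemma ae_imp_le_of_forall_measure_eq_zero {f g : Ω → EReal} {K : Set Ω}
    (h : ∀ a b : ℝ, a < b → μ ({ω | f ω < a} ∩ {ω | (b : EReal) < g ω} ∩ K) = 0) :
    ∀ᵐ ω ∂μ, ω ∈ K → g ω ≤ f ω := by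
  have hrat : ∀ᵐ ω ∂μ, ∀ a b : ℚ, (a : ℝ) < b →
      ω ∉ {ω | f ω < (a : ℝ)} ∩ {ω | ((b : ℝ) : EReal) < g ω} ∩ K := by
    refine ae_all_iff.2 fun a => ae_all_iff.2 fun b => ?_
    by_cases hab : (a : ℝ) < b
    · exact (measure_eq_zero_iff_ae_notMem.1 (h _ _ hab)).mono fun ω hω _ => hω
    · exact Eventually.of_forall fun ω h => absurd h hab
  filter_upwards [hrat] with ω hω hK
  by_contra! hlt
  obtain ⟨a, ha, hag⟩ := EReal.exists_rat_btwn_of_lt hlt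
  obtain ⟨b, hab, hb⟩ := EReal.exists_rat_btwn_of_lt hag
  exact hω a b (EReal.coe_lt_coe_iff.1 hab) ⟨⟨ha, hb⟩, hK⟩

lemma lintegral_eq_of_forall_measurableSet_eq {G : MeasurableSpace Ω} (hG : G ≤ m0)
    (hμν : ∀ A, MeasurableSet[G] A → μ A = ν A) {f : Ω → ℝ≥0∞} (hf : Measurable[G] f) :
    ∫⁻ ω, f ω ∂μ = ∫⁻ ω, f ω ∂ν := by
  have htrim : μ.trim hG = ν.trim hG := Measure.ext fun A hA => by
    rw [trim_measurableSet_eq hG hA, trim_measurableSet_eq hG hA, hμν A hA]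
  rw [← lintegral_trim hG hf, ← lintegral_trim hG hf, htrim]

lemma eInt_restrict_eq_of_forall_measurableSet_eq {G : MeasurableSpace Ω} (hG : G ≤ m0)
    (hμν : ∀ A, MeasurableSet[G] A → μ A = ν A) {f : Ω → EReal} (hf : Measurable[G] f)
    {B : Set Ω} (hB : MeasurableSet[G] B) :
    eInt (μ.restrict B) f = eInt (ν.restrict B) f := by
  have hμνB : ∀ A, MeasurableSet[G] A → μ.restrict B A = ν.restrict B A := fun A hA => by
    rw [Measure.restrict_apply (hG A hA), Measure.restrict_apply (hG A hA), hμν _ (hA.inter hB)]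
  rw [eInt, eInt,
    lintegral_eq_of_forall_measurableSet_eq hG hμνB (f := fun ω => epos (f ω))
      (measurable_epos.comp hf),
    lintegral_eq_of_forall_measurableSet_eq hG hμνB (f := fun ω => eneg (f ω))
      (measurable_eneg.comp hf)]

lemma IsCondExp.lintegral_eneg_ne_top {G : MeasurableSpace Ω} (hG : G ≤ m0) {X Y : Ω → EReal}
    (h : IsCondExp G μ X Y) (hX : ∫⁻ ω, eneg (X ω) ∂μ ≠ ⊤) : ∫⁻ ω, eneg (Y ω) ∂μ ≠ ⊤ := by
  have hB : MeasurableSet[G] {ω | Y ω < 0} := h.1 measurableSet_Iio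
  have hpos : ∫⁻ ω in {ω | Y ω < 0}, epos (Y ω) ∂μ = 0 := by
    refine (setLIntegral_congr_fun (hG _ hB) (g := fun _ => 0) fun ω hω => ?_).trans lintegral_zero
    exact EReal.toENNReal_of_nonpos (le_of_lt hω)
  rw [← setLIntegral_eq_of_support_subset (s := {ω | Y ω < 0}) fun ω hω =>
    not_le.1 fun h0 => hω (eneg_of_nonneg h0)]
  refine ne_top_of_le_ne_top hX ?_
  calc ∫⁻ ω in {ω | Y ω < 0}, eneg (Y ω) ∂μ
      ≤ ∫⁻ ω in {ω | Y ω < 0}, epos (X ω) ∂μ + ∫⁻ ω in {ω | Y ω < 0}, eneg (Y ω) ∂μ := le_add_self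
    _ = ∫⁻ ω in {ω | Y ω < 0}, eneg (X ω) ∂μ := by rw [← h.2 _ hB, hpos, zero_add]
    _ ≤ ∫⁻ ω, eneg (X ω) ∂μ := setLIntegral_le_lintegral _ _

lemma IsCondExp.eInt_restrict_eq {G : MeasurableSpace Ω} (hG : G ≤ m0) {X Y : Ω → EReal}
    (h : IsCondExp G μ X Y) (hX : ∫⁻ ω, eneg (X ω) ∂μ ≠ ⊤) {B : Set Ω}
    (hB : MeasurableSet[G] B) : eInt (μ.restrict B) Y = eInt (μ.restrict B) X := by
  have hXB : ∫⁻ ω in B, eneg (X ω) ∂μ ≠ ⊤ :=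
    ne_top_of_le_ne_top hX (setLIntegral_le_lintegral _ _)
  have hYB : ∫⁻ ω in B, eneg (Y ω) ∂μ ≠ ⊤ :=
    ne_top_of_le_ne_top (h.lintegral_eneg_ne_top hG hX) (setLIntegral_le_lintegral _ _)
  exact le_antisymm ((eInt_le_eInt_iff hYB hXB).2 (h.2 B hB).le)
    ((eInt_le_eInt_iff hXB hYB).2 (h.2 B hB).ge)

end ExtendedIntegral

section EssentialSupremum

variable {ι : Type*} {m0 : MeasurableSpace Ω}

lemma exists_countable_ae_subset_biUnion (μ : Measure Ω) [SFinite μ] {A : ι → Set Ω}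
    (hA : ∀ i, MeasurableSet (A i)) :
    ∃ I : Set ι, I.Countable ∧ ∀ i, A i ≤ᵐ[μ] ⋃ j ∈ I, A j := by
  obtain ⟨S, hSA, hSc, hS⟩ :=
    Measure.exists_ae_subset_biUnion_countable μ (C := range A) (forall_mem_range.2 hA)
  have hSA' : ∀ s ∈ S, ∃ i, A i = s := hSA
  choose g hg using hSA'
  have := hSc.to_subtype
  refine ⟨range fun s : S => g s s.2, countable_range _, fun i => ?_⟩
  have hSg : ⋃₀ S = ⋃ j ∈ range fun s : S => g s s.2, A j := by
    rw [biUnion_range, sUnion_eq_iUnion]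
    exact iUnion_congr fun s => (hg s s.2).symm
  exact hSg ▸ hS _ (mem_range_self i)

lemma exists_seq_ae_le_iSup (μ : Measure Ω) [SFinite μ] [Nonempty ι] {f : ι → Ω → EReal}
    (hf : ∀ i, Measurable (f i)) : ∃ d : ℕ → ι, ∀ i, ∀ᵐ ω ∂μ, f i ω ≤ ⨆ n, f (d n) ω := by
  choose I hIc hI using fun t : ℚ =>
    exists_countable_ae_subset_biUnion μ (A := fun i => {ω | ((t : ℝ) : EReal) < f i ω})
      fun i => hf i measurableSet_Ioi
  obtain ⟨d, hd⟩ := ((countable_iUnion hIc).insert (Classical.arbitrary ι)).exists_eq_range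
    (insert_nonempty _ _)
  refine ⟨d, fun i => ?_⟩
  filter_upwards [ae_all_iff.2 fun t => hI t i] with ω hω
  by_contra! hlt
  obtain ⟨t, ht, hti⟩ := EReal.exists_rat_btwn_of_lt hlt
  have hmem : ω ∈ ⋃ j ∈ I t, {ω | ((t : ℝ) : EReal) < f j ω} := hω t hti
  obtain ⟨j, hj, htj⟩ := mem_iUnion₂.1 hmem
  obtain ⟨n, rfl⟩ : j ∈ range d := hd ▸ mem_insert_of_mem _ (mem_iUnion.2 ⟨t, hj⟩)
  exact (ht.trans htj).not_ge (le_iSup (fun n => f (d n) ω) n)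

lemma IsEssSup.ae_inf_le {μ : Measure Ω} {F : ι → Ω → EReal} {Z U : Ω → EReal}
    (hZ : IsEssSup μ F Z) (M : EReal) (hU : ∀ i, ∀ᵐ ω ∂μ, M ⊓ F i ω ≤ U ω) :
    ∀ᵐ ω ∂μ, M ⊓ Z ω ≤ U ω := by
  classical
  -- `W` is an a.s. upper bound of the whole family, and it agrees with `U` where `U < M`.
  let W : Ω → EReal := fun ω => if U ω < M then U ω else ⊤
  have hFW : ∀ i, ∀ᵐ ω ∂μ, F i ω ≤ W ω := fun i => (hU i).mono fun ω hω => by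
    by_cases hUM : U ω < M
    · rcases inf_lt_iff.1 (hω.trans_lt hUM) with hM | hF
      · exact absurd hM (lt_irrefl _)
      · simpa only [W, if_pos hUM, inf_eq_right.2 hF.le] using hω
    · simp only [W, if_neg hUM, le_top]
  filter_upwards [hZ.2 W hFW] with ω hω
  by_cases hUM : U ω < M
  · simp only [W, if_pos hUM] at hω
    exact inf_le_right.trans hω
  · exact inf_le_left.trans (not_lt.1 hUM)

end EssentialSupremum

section UpwardsLattice

variable {ι : Type*} {m0 : MeasurableSpace Ω}

def WeakUpwardsLattice (μ : Measure Ω) (F : ι → Ω → EReal) (D : Set ι) : Prop :=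
  ∀ ε : ℝ, 0 < ε → ∀ M : ℝ, 0 < M → ∀ d ∈ D, ∀ d' ∈ D, ∃ d'' ∈ D,
    ∀ᵐ ω ∂μ, ((M : EReal) ⊓ F d ω) ⊔ ((M : EReal) ⊓ F d' ω) - (ε : EReal) ≤ F d'' ω

lemma WeakUpwardsLattice.exists_ae_partialSups_le {μ : Measure Ω} {F : ι → Ω → EReal}
    {D : Set ι} (hlat : WeakUpwardsLattice μ F D) {M : ℝ} (hM : 0 < M) (d : ℕ → D) (n : ℕ) :
    ∀ ε : ℝ, 0 < ε → ∃ e ∈ D, ∀ᵐ ω ∂μ,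
      partialSups (fun k ω => (M : EReal) ⊓ F (d k) ω) n ω ≤ F e ω + ε := by
  set r := partialSups fun k ω => (M : EReal) ⊓ F (d k) ω
  induction n with
  | zero =>
    intro ε hε
    refine ⟨d 0, (d 0).2, Eventually.of_forall fun ω => ?_⟩
    simp only [r, partialSups_zero]
    exact inf_le_right.trans (le_add_of_nonneg_right (EReal.coe_nonneg.2 hε.le))
  | succ n ih =>
    intro ε hε
    obtain ⟨e, he, hae⟩ := ih (ε / 2) (half_pos hε)
    obtain ⟨e', he', hae'⟩ := hlat (ε / 2) (half_pos hε) M hM e he (d (n + 1)) (d (n + 1)).2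
    refine ⟨e', he', ?_⟩
    filter_upwards [hae, hae'] with ω h h'
    rw [EReal.sub_le_iff_le_add (Or.inl (EReal.coe_ne_bot _)) (Or.inl (EReal.coe_ne_top _))] at h'
    have hrM : r n ω ≤ M := partialSups_le (fun k ω => (M : EReal) ⊓ F (d k) ω) n (fun _ => M)
      (fun _ _ _ => inf_le_left) ω
    have hsucc : r (n + 1) = r n ⊔ fun ω => (M : EReal) ⊓ F (d (n + 1)) ω := by
      simp only [r, ← Order.succ_eq_add_one, partialSups_succ]
    calc r (n + 1) ω = r n ω ⊔ (M : EReal) ⊓ F (d (n + 1)) ω := by rw [hsucc]; rfl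
      _ ≤ ((M : EReal) ⊓ F e ω + (ε / 2 : ℝ)) ⊔ ((M : EReal) ⊓ F (d (n + 1)) ω + (ε / 2 : ℝ)) :=
          sup_le_sup ((le_inf hrM h).trans (EReal.inf_add_le_add _ _ (half_pos hε).le))
            (le_add_of_nonneg_right (EReal.coe_nonneg.2 (half_pos hε).le))
      _ = ((M : EReal) ⊓ F e ω) ⊔ ((M : EReal) ⊓ F (d (n + 1)) ω) + (ε / 2 : ℝ) :=
          max_add_add_right _ _ _
      _ ≤ F e' ω + (ε / 2 : ℝ) + (ε / 2 : ℝ) := by gcongr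
      _ = F e' ω + ε := by rw [add_assoc, ← EReal.coe_add, add_halves]

end UpwardsLattice

section EssSupBound

variable {ι : Type*} {m0 : MeasurableSpace Ω} {ν : Measure Ω} [IsProbabilityMeasure ν]
  {B : Set Ω} {F : ι → Ω → EReal} {D : Set ι} {Z : Ω → EReal} {x : ℝ}

lemma eInt_restrict_inf_le_of_isEssSup (hD : D.Nonempty) (hF : ∀ i ∈ D, Measurable (F i))
    (hlat : WeakUpwardsLattice ν F D) (hZ : IsEssSup ν (fun d : D => F d) Z)
    (hneg : ∀ i ∈ D, ∫⁻ ω in B, eneg (F i ω) ∂ν ≠ ⊤)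
    (hx : ∀ i ∈ D, eInt (ν.restrict B) (F i) ≤ x) {M : ℝ} (hM : 0 < M) :
    eInt (ν.restrict B) (fun ω => (M : EReal) ⊓ Z ω) ≤ x := by
  have := hD.to_subtype
  obtain ⟨d, hd⟩ := exists_seq_ae_le_iSup ν (f := fun (i : D) ω => (M : EReal) ⊓ F i ω)
    fun i => measurable_const.min (hF i i.2)
  set r := partialSups fun k ω => (M : EReal) ⊓ F (d k) ω
  have hr : ∀ n, Measurable (r n) := by
    intro n
    induction n with
    | zero => simpa only [r, partialSups_zero] using measurable_const.min (hF _ (d 0).2)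
    | succ n ih =>
      simp only [r, ← Order.succ_eq_add_one, partialSups_succ]
      exact ih.sup (measurable_const.min (hF _ (d _).2))
  have hZr : ∀ᵐ ω ∂ν, (M : EReal) ⊓ Z ω ≤ ⨆ n, r n ω := by
    refine hZ.ae_inf_le M fun i => (hd i).mono fun ω hω => hω.trans_eq ?_
    rw [← iSup_apply, iSup_partialSups_eq, iSup_apply]
  have hrx : ∀ n, eInt (ν.restrict B) (r n) ≤ x := fun n =>
    EReal.le_of_forall_pos_le_coe_add fun ε hε => by
      obtain ⟨e, he, hae⟩ := hlat.exists_ae_partialSups_le hM d n (ε / 2) (half_pos hε)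
      have hB1 : ν.restrict B univ ≤ 1 := by
        rw [Measure.restrict_apply_univ]
        exact prob_le_one
      calc eInt (ν.restrict B) (r n)
          ≤ eInt (ν.restrict B) (fun ω => F e ω + (ε / 2 : ℝ)) := eInt_mono (ae_restrict_of_ae hae)
        _ ≤ eInt (ν.restrict B) (F e) + ((2 * (ε / 2) : ℝ) : EReal) :=
            eInt_add_const_le (half_pos hε).le hB1 (hneg e he)
        _ ≤ x + ((2 * (ε / 2) : ℝ) : EReal) := by gcongr; exact hx e he
        _ = ((x + ε : ℝ) : EReal) := by rw [← EReal.coe_add, mul_div_cancel₀ _ two_ne_zero]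
  have hr0 : ∫⁻ ω in B, eneg (r 0 ω) ∂ν ≠ ⊤ := by
    simpa only [r, partialSups_zero, eneg_coe_inf hM.le] using hneg _ (d 0).2
  calc eInt (ν.restrict B) (fun ω => (M : EReal) ⊓ Z ω)
      ≤ eInt (ν.restrict B) (fun ω => ⨆ n, r n ω) := eInt_mono (ae_restrict_of_ae hZr)
    _ ≤ x := eInt_iSup_le hr r.monotone hr0 hrx

lemma eInt_restrict_le_of_isEssSup (hD : D.Nonempty) (hF : ∀ i ∈ D, Measurable (F i))
    (hlat : WeakUpwardsLattice ν F D) (hZm : Measurable Z) (hZ : IsEssSup ν (fun d : D => F d) Z)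
    (hneg : ∀ i ∈ D, ∫⁻ ω in B, eneg (F i ω) ∂ν ≠ ⊤)
    (hx : ∀ i ∈ D, eInt (ν.restrict B) (F i) ≤ x) : eInt (ν.restrict B) Z ≤ x := by
  obtain ⟨i, hi⟩ := hD
  have hZ_eq : Z = fun ω => ⨆ n : ℕ, (((n : ℝ) + 1 : ℝ) : EReal) ⊓ Z ω := funext fun ω => by
    rw [← iSup_inf_eq, EReal.iSup_natCast_add_one, top_inf_eq]
  have hneg0 : ∫⁻ ω in B, eneg ((((0 : ℕ) : ℝ) + 1 : ℝ) ⊓ Z ω) ∂ν ≠ ⊤ := by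
    simp_rw [eneg_coe_inf (by positivity : (0 : ℝ) ≤ (0 : ℕ) + 1)]
    refine ne_top_of_le_ne_top (hneg i hi) (lintegral_mono_ae ?_)
    exact (ae_restrict_of_ae (hZ.1 ⟨i, hi⟩)).mono fun ω h => antitone_eneg h
  rw [hZ_eq]
  refine eInt_iSup_le (r := fun n ω => (((n : ℝ) + 1 : ℝ) : EReal) ⊓ Z ω)
    (fun n => measurable_const.min hZm) (fun n m h ω => ?_) hneg0
    fun n => eInt_restrict_inf_le_of_isEssSup ⟨i, hi⟩ hF hlat hZ hneg hx (by positivity)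
  exact inf_le_inf_right _ (EReal.coe_le_coe_iff.2 (by gcongr))

end EssSupBound

section StoppedSigmaAlgebra

variable [LinearOrder T] {G : T → MeasurableSpace Ω} {σ τ : Ω → WithTop T}

lemma exists_countable_separating_times (hT : Nonempty (T ≃o ℕ) ∨ Nonempty (T ≃o ℝ≥0)) :
    ∃ Q : Set T, Q.Countable ∧
      ∀ a b : WithTop T, a < b → ∃ q ∈ Q, a ≤ (q : WithTop T) ∧ (q : WithTop T) < b := by
  rcases hT with ⟨⟨e⟩⟩ | ⟨⟨e⟩⟩
  · have : Countable T := Countable.of_equiv ℕ e.symm.toEquiv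
    refine ⟨univ, countable_univ, fun a b hab => ?_⟩
    lift a to T using (hab.trans_le le_top).ne
    exact ⟨a, mem_univ a, le_rfl, hab⟩
  · refine ⟨range fun q : ℚ => e.symm (Real.toNNReal q), countable_range _, fun a b hab => ?_⟩
    lift a to T using (hab.trans_le le_top).ne
    have hle : ∀ q : ℚ, ((e a : ℝ≥0) : ℝ) ≤ q → (a : WithTop T) ≤ (e.symm (Real.toNNReal q)) :=
      fun q hq => WithTop.coe_le_coe.2 <| by
        rw [← e.le_iff_le, e.apply_symm_apply]
        exact (Real.le_toNNReal_iff_coe_le ((e a).coe_nonneg.trans hq)).2 hq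
    induction b using WithTop.recTopCoe with
    | top =>
      obtain ⟨q, hq⟩ := exists_rat_gt ((e a : ℝ≥0) : ℝ)
      exact ⟨_, mem_range_self q, hle q hq.le, WithTop.coe_lt_top _⟩
    | coe b =>
      have hab' : ((e a : ℝ≥0) : ℝ) < e b := by exact_mod_cast e.lt_iff_lt.2 (WithTop.coe_lt_coe.1 hab)
      obtain ⟨q, hq1, hq2⟩ := exists_rat_btwn hab'
      refine ⟨_, mem_range_self q, hle q hq1.le, WithTop.coe_lt_coe.2 ?_⟩
      rw [← e.lt_iff_lt, e.apply_symm_apply]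
      exact (Real.toNNReal_lt_iff_lt_coe ((e a).coe_nonneg.trans hq1.le)).2 hq2

lemma setOf_lt_eq_biUnion {Q : Set T}
    (hQ : ∀ a b : WithTop T, a < b → ∃ q ∈ Q, a ≤ (q : WithTop T) ∧ (q : WithTop T) < b) :
    {ω | τ ω < σ ω} = ⋃ q ∈ Q, {ω | τ ω ≤ q} \ {ω | σ ω ≤ q} := by
  ext ω
  simp only [mem_ofPred_eq, mem_iUnion, Set.mem_sdiff, exists_prop, not_le]
  exact ⟨fun h => hQ _ _ h, fun ⟨_, _, h1, h2⟩ => h1.trans_lt h2⟩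

lemma measurableSet_sigmaAtTime_lt (hG : Monotone G)
    (hσ : ∀ t : T, MeasurableSet[G t] {ω | σ ω ≤ (t : WithTop T)})
    (hτ : ∀ t : T, MeasurableSet[G t] {ω | τ ω ≤ (t : WithTop T)}) {Q : Set T} (hQc : Q.Countable)
    (hQ : ∀ a b : WithTop T, a < b → ∃ q ∈ Q, a ≤ (q : WithTop T) ∧ (q : WithTop T) < b) :
    MeasurableSet[sigmaAtTime G σ hσ] {ω | τ ω < σ ω} := by
  rw [setOf_lt_eq_biUnion hQ]
  refine ⟨.biUnion hQc fun q _ => le_iSup G q _ ((hτ q).diff (hσ q)), fun u => ?_⟩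
  rw [iUnion₂_inter]
  refine .biUnion hQc fun q _ => ?_
  rcases le_or_gt q u with hqu | huq
  · exact (hG hqu _ ((hτ q).diff (hσ q))).inter (hσ u)
  · convert @MeasurableSet.empty Ω (G u)
    refine eq_empty_of_forall_notMem fun ω ⟨⟨_, hσq⟩, hσu⟩ => hσq ?_
    exact hσu.trans (WithTop.coe_le_coe.2 huq.le)

lemma measurableSet_sigmaAtTime_le (hG : Monotone G)
    (hσ : ∀ t : T, MeasurableSet[G t] {ω | σ ω ≤ (t : WithTop T)})
    (hτ : ∀ t : T, MeasurableSet[G t] {ω | τ ω ≤ (t : WithTop T)}) {Q : Set T} (hQc : Q.Countable)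
    (hQ : ∀ a b : WithTop T, a < b → ∃ q ∈ Q, a ≤ (q : WithTop T) ∧ (q : WithTop T) < b) :
    MeasurableSet[sigmaAtTime G σ hσ] {ω | σ ω ≤ τ ω} := by
  simpa only [compl_ofPred, not_lt] using (measurableSet_sigmaAtTime_lt hG hσ hτ hQc hQ).compl

lemma measurableSet_sigmaAtTime_of_subset_le
    (hσ : ∀ t : T, MeasurableSet[G t] {ω | σ ω ≤ (t : WithTop T)})
    (hτ : ∀ t : T, MeasurableSet[G t] {ω | τ ω ≤ (t : WithTop T)}) {A : Set Ω}
    (hA : MeasurableSet[sigmaAtTime G σ hσ] A) (hAστ : A ⊆ {ω | σ ω ≤ τ ω}) :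
    MeasurableSet[sigmaAtTime G τ hτ] A := by
  refine ⟨hA.1, fun u => ?_⟩
  have hAu : A ∩ {ω | τ ω ≤ u} = A ∩ {ω | σ ω ≤ u} ∩ {ω | τ ω ≤ u} := by
    ext ω
    exact ⟨fun ⟨hω, hu⟩ => ⟨⟨hω, show σ ω ≤ u from (hAστ hω).trans hu⟩, hu⟩,
      fun ⟨⟨hω, _⟩, hu⟩ => ⟨hω, hu⟩⟩
  rw [hAu]
  exact (hA.2 u).inter (hτ u)

end StoppedSigmaAlgebra

namespace CCS

variable [LinearOrder T] [OrderBot T] (𝒮 : CCS Ω C T)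

def IsCondPayoff (Jc : C → (C → Ω → WithTop T) → Ω → EReal) : Prop :=
  ∀ d, ∀ S, ∀ hS : S ∈ 𝒮.CT,
    IsCondExp (sigmaAtTime (𝒮.G d) (S d) (𝒮.hCT S hS d)) (𝒮.P d) (𝒮.J d) (Jc d S)

lemma sigmaAtTime_le (d : C) {S : C → Ω → WithTop T} (hS : S ∈ 𝒮.CT) :
    sigmaAtTime (𝒮.G d) (S d) (𝒮.hCT S hS d) ≤ 𝒮.m :=
  fun _ hA => 𝒮.hF d _ (𝒮.hGF d _ hA.1)

variable {𝒮} {Jc : C → (C → Ω → WithTop T) → Ω → EReal} {c e : C} {S T' : C → Ω → WithTop T}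

lemma IsCondPayoff.measurable (hJc : 𝒮.IsCondPayoff Jc) (hS : S ∈ 𝒮.CT) (he : e ∈ 𝒮.D c S) :
    Measurable[sigmaAtTime (𝒮.G c) (S c) (𝒮.hCT S hS c)] (Jc e S) :=
  𝒮.hStableG c e S hS he ▸ (hJc e S hS).1

lemma IsCondPayoff.lintegral_eneg_ne_top (hJc : 𝒮.IsCondPayoff Jc) (hS : S ∈ 𝒮.CT)
    (he : e ∈ 𝒮.D c S) : ∫⁻ ω, eneg (Jc e S ω) ∂𝒮.P c ≠ ⊤ := by
  rw [lintegral_eq_of_forall_measurableSet_eq (𝒮.sigmaAtTime_le c hS) (𝒮.hStableP c e S hS he)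
    (f := fun ω => eneg (Jc e S ω)) (measurable_eneg.comp (hJc.measurable hS he))]
  exact (hJc e S hS).lintegral_eneg_ne_top (𝒮.sigmaAtTime_le e hS) (𝒮.hJneg e).ne

lemma IsCondPayoff.eInt_restrict_eq (hJc : 𝒮.IsCondPayoff Jc) (hS : S ∈ 𝒮.CT)
    (he : e ∈ 𝒮.D c S) {B : Set Ω} (hB : MeasurableSet[sigmaAtTime (𝒮.G c) (S c) (𝒮.hCT S hS c)] B) :
    eInt ((𝒮.P c).restrict B) (Jc e S) = eInt ((𝒮.P e).restrict B) (𝒮.J e) := by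
  rw [eInt_restrict_eq_of_forall_measurableSet_eq (𝒮.sigmaAtTime_le c hS)
    (𝒮.hStableP c e S hS he) (hJc.measurable hS he) hB]
  exact (hJc e S hS).eInt_restrict_eq (𝒮.sigmaAtTime_le e hS) (𝒮.hJneg e).ne
    (𝒮.hStableG c e S hS he ▸ hB)

lemma IsCondPayoff.eInt_restrict_eq_of_mem (hJc : 𝒮.IsCondPayoff Jc) (hS : S ∈ 𝒮.CT)
    (hT' : T' ∈ 𝒮.CT) (heS : e ∈ 𝒮.D c S) (heT : e ∈ 𝒮.D c T') {B : Set Ω}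
    (hBS : MeasurableSet[sigmaAtTime (𝒮.G c) (S c) (𝒮.hCT S hS c)] B)
    (hBT : MeasurableSet[sigmaAtTime (𝒮.G c) (T' c) (𝒮.hCT T' hT' c)] B) :
    eInt ((𝒮.P c).restrict B) (Jc e T') = eInt ((𝒮.P c).restrict B) (Jc e S) := by
  rw [hJc.eInt_restrict_eq hT' heT hBT, hJc.eInt_restrict_eq hS heS hBS]

lemma IsCondPayoff.eInt_restrict_essSup_le (hJc : 𝒮.IsCondPayoff Jc) (hS : S ∈ 𝒮.CT)
    (hT' : T' ∈ 𝒮.CT) (hDsub : 𝒮.D c T' ⊆ 𝒮.D c S)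
    (hlat : WeakUpwardsLattice (𝒮.P c) (fun d => Jc d T') (𝒮.D c T')) {VS VT : Ω → EReal}
    (hVS : IsEssSup (𝒮.P c) (fun d : 𝒮.D c S => Jc (↑d) S) VS)
    (hVTmeas : Measurable[sigmaAtTime (𝒮.G c) (T' c) (𝒮.hCT T' hT' c)] VT)
    (hVT : IsEssSup (𝒮.P c) (fun d : 𝒮.D c T' => Jc (↑d) T') VT) {B : Set Ω}
    (hBS : MeasurableSet[sigmaAtTime (𝒮.G c) (S c) (𝒮.hCT S hS c)] B)
    (hBT : MeasurableSet[sigmaAtTime (𝒮.G c) (T' c) (𝒮.hCT T' hT' c)] B) {a : ℝ}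
    (ha : ∀ ω ∈ B, VS ω ≤ a) :
    eInt ((𝒮.P c).restrict B) VT ≤ ((a * (𝒮.P c B).toReal : ℝ) : EReal) := by
  have := 𝒮.hP c
  have hBm : MeasurableSet[𝒮.m] B := 𝒮.sigmaAtTime_le c hS _ hBS
  refine eInt_restrict_le_of_isEssSup ⟨c, 𝒮.hD_self c T' hT'⟩
    (fun e _ => (hJc e T' hT').1.mono (𝒮.sigmaAtTime_le e hT') le_rfl) hlat
    (hVTmeas.mono (𝒮.sigmaAtTime_le c hT') le_rfl) hVT
    (fun e he => ne_top_of_le_ne_top (hJc.lintegral_eneg_ne_top hT' he)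
      (setLIntegral_le_lintegral _ _)) fun e he => ?_
  rw [hJc.eInt_restrict_eq_of_mem hS hT' (hDsub he) he hBS hBT, ← Measure.restrict_apply_univ B,
    ← eInt_const]
  refine eInt_mono ?_
  filter_upwards [ae_restrict_of_ae (hVS.1 ⟨e, hDsub he⟩), ae_restrict_mem hBm] with ω h hω
  exact h.trans (ha ω hω)

end CCS

theorem stmt_17_general [LinearOrder T] [OrderBot T]
    (hT : Nonempty (T ≃o ℕ) ∨ Nonempty (T ≃o NNReal))
    (𝒮 : CCS Ω C T)
    -- the conditional payoff system `J(d, S) = E^{P^d}[J(d) | G^d_{S^d}]`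
    (Jc : C → (C → Ω → WithTop T) → Ω → EReal)
    (hJc : ∀ d, ∀ S, ∀ hS : S ∈ 𝒮.CT,
      IsCondExp (sigmaAtTime (𝒮.G d) (S d) (𝒮.hCT S hS d)) (𝒮.P d) (𝒮.J d) (Jc d S))
    -- the weak upwards lattice property
    (hlat : ∀ c, ∀ S ∈ 𝒮.CT, ∀ ε : ℝ, 0 < ε → ∀ M : ℝ, 0 < M →
      ∀ d ∈ 𝒮.D c S, ∀ d' ∈ 𝒮.D c S, ∃ d'' ∈ 𝒮.D c S,
        ∀ᵐ ω ∂𝒮.P c,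
          ((M : EReal) ⊓ Jc d S ω) ⊔ ((M : EReal) ⊓ Jc d' S ω) - (ε : EReal) ≤ Jc d'' S ω)
    (c : C) (S T' : C → Ω → WithTop T) (hS : S ∈ 𝒮.CT) (hT' : T' ∈ 𝒮.CT)
    (hle : ∀ d ∈ 𝒮.D c T', ∀ᵐ ω ∂𝒮.P d, S d ω ≤ T' d ω)
    -- `VS = V(c, S)`, the Bellman system at `(c, S)`
    (VS : Ω → EReal)
    (hVSmeas : Measurable[sigmaAtTime (𝒮.G c) (S c) (𝒮.hCT S hS c)] VS)
    (hVS : IsEssSup (𝒮.P c) (fun d : 𝒮.D c S => Jc (↑d) S) VS)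
    -- `VT = V(c, T')`, the Bellman system at `(c, T')`
    (VT : Ω → EReal)
    (hVTmeas : Measurable[sigmaAtTime (𝒮.G c) (T' c) (𝒮.hCT T' hT' c)] VT)
    (hVT : IsEssSup (𝒮.P c) (fun d : 𝒮.D c T' => Jc (↑d) T') VT)
    -- `Y = E^{P^c}[V(c,T') | G^c_{S^c}]`
    (Y : Ω → EReal)
    (hY : IsCondExp (sigmaAtTime (𝒮.G c) (S c) (𝒮.hCT S hS c)) (𝒮.P c) VT Y) :
    ∀ᵐ ω ∂𝒮.P c, Y ω ≤ VS ω := by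
  have := 𝒮.hP c
  have hJc' : 𝒮.IsCondPayoff Jc := hJc
  obtain ⟨Q, hQc, hQ⟩ := exists_countable_separating_times hT
  suffices hgap : ∀ a b : ℝ, a < b →
      𝒮.P c ({ω | VS ω < a} ∩ {ω | (b : EReal) < Y ω} ∩ {ω | S c ω ≤ T' c ω}) = 0 by
    filter_upwards [hle c (𝒮.hD_self c T' hT'), ae_imp_le_of_forall_measure_eq_zero hgap]
      with ω hST h using h hST
  intro a b hab
  set B := {ω | VS ω < a} ∩ {ω | (b : EReal) < Y ω} ∩ {ω | S c ω ≤ T' c ω}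
  have hBS : MeasurableSet[sigmaAtTime (𝒮.G c) (S c) (𝒮.hCT S hS c)] B :=
    ((hVSmeas measurableSet_Iio).inter (hY.1 measurableSet_Ioi)).inter
      (measurableSet_sigmaAtTime_le (𝒮.hGmono c) _ (𝒮.hCT T' hT' c) hQc hQ)
  have hBT : MeasurableSet[sigmaAtTime (𝒮.G c) (T' c) (𝒮.hCT T' hT' c)] B :=
    measurableSet_sigmaAtTime_of_subset_le _ _ hBS inter_subset_right
  have hVT_neg : ∫⁻ ω, eneg (VT ω) ∂𝒮.P c ≠ ⊤ :=
    ne_top_of_le_ne_top (hJc'.lintegral_eneg_ne_top hT' (𝒮.hD_self c T' hT'))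
      (lintegral_mono_ae ((hVT.1 ⟨c, 𝒮.hD_self c T' hT'⟩).mono fun _ h => antitone_eneg h))
  refine measure_eq_zero_of_eInt_restrict_le (𝒮.sigmaAtTime_le c hS _ hBS) hab
    (fun ω hω => hω.1.2) ?_
  rw [hY.eInt_restrict_eq (𝒮.sigmaAtTime_le c hS) hVT_neg hBS]
  exact hJc'.eInt_restrict_essSup_le hS hT' (𝒮.hD_mono S hS T' hT' c hle) (hlat c T' hT') hVS
    hVTmeas hVT hBS hBT fun ω hω => hω.1.1.le

/-- **Bellman's principle (B1): the Bellman system is a supermartingale system.** In a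
coherent stochastic control system with the weak upwards lattice property and with the
constant times `0` and `∞` in `𝔊`, for all `S, T' ∈ 𝔊` and controls `c` with
`S^d ≤ T'^d` `P^d`-a.s. for all `d ∈ D(c,T')`, one has
`E^{P^c}[V(c,T') | G^c_{S^c}] ≤ V(c,S)` `P^c`-a.s. -/
theorem stmt_17 [LinearOrder T] [OrderBot T]
    (hT : Nonempty (T ≃o ℕ) ∨ Nonempty (T ≃o NNReal))
    (𝒮 : CCS Ω C T)
    (hbot : (fun (_ : C) (_ : Ω) => ((⊥ : T) : WithTop T)) ∈ 𝒮.CT)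
    (htop : (fun (_ : C) (_ : Ω) => (⊤ : WithTop T)) ∈ 𝒮.CT)
    -- the conditional payoff system `J(d, S) = E^{P^d}[J(d) | G^d_{S^d}]`
    (Jc : C → (C → Ω → WithTop T) → Ω → EReal)
    (hJc : ∀ d, ∀ S, ∀ hS : S ∈ 𝒮.CT,
      IsCondExp (sigmaAtTime (𝒮.G d) (S d) (𝒮.hCT S hS d)) (𝒮.P d) (𝒮.J d) (Jc d S))
    -- the weak upwards lattice property
    (hlat : ∀ c, ∀ S ∈ 𝒮.CT, ∀ ε : ℝ, 0 < ε → ∀ M : ℝ, 0 < M →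
      ∀ d ∈ 𝒮.D c S, ∀ d' ∈ 𝒮.D c S, ∃ d'' ∈ 𝒮.D c S,
        ∀ᵐ ω ∂𝒮.P c,
          ((M : EReal) ⊓ Jc d S ω) ⊔ ((M : EReal) ⊓ Jc d' S ω) - (ε : EReal) ≤ Jc d'' S ω)
    (c : C) (S T' : C → Ω → WithTop T) (hS : S ∈ 𝒮.CT) (hT' : T' ∈ 𝒮.CT)
    (hle : ∀ d ∈ 𝒮.D c T', ∀ᵐ ω ∂𝒮.P d, S d ω ≤ T' d ω)
    -- `VS = V(c, S)`, the Bellman system at `(c, S)`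
    (VS : Ω → EReal)
    (hVSmeas : Measurable[sigmaAtTime (𝒮.G c) (S c) (𝒮.hCT S hS c)] VS)
    (hVS : IsEssSup (𝒮.P c) (fun d : 𝒮.D c S => Jc (↑d) S) VS)
    -- `VT = V(c, T')`, the Bellman system at `(c, T')`
    (VT : Ω → EReal)
    (hVTmeas : Measurable[sigmaAtTime (𝒮.G c) (T' c) (𝒮.hCT T' hT' c)] VT)
    (hVT : IsEssSup (𝒮.P c) (fun d : 𝒮.D c T' => Jc (↑d) T') VT)
    -- `Y = E^{P^c}[V(c,T') | G^c_{S^c}]`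
    (Y : Ω → EReal)
    (hY : IsCondExp (sigmaAtTime (𝒮.G c) (S c) (𝒮.hCT S hS c)) (𝒮.P c) VT Y) :
    ∀ᵐ ω ∂𝒮.P c, Y ω ≤ VS ω :=
  stmt_17_general hT 𝒮 Jc hJc hlat c S T' hS hT' hle VS hVSmeas hVS VT hVTmeas hVT Y hY
end
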